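/- For all integers m ≥ 2 and d ≥ 1, every 2-TC-spanner of the directed hypergrid [m]^d has at least (m−1)^d · L(d) / 2^{d+1} edges, where L(d) denotes the minimum number of edges of a 2-TC-spanner of the Boolean hypercube [2]^d. -/

import Mathlib

/-- There is a directed walk of length at most `k` from `u` to `v` in the digraph
with edge relation `E`. -/
def distLE {V : Type*} (E : V → V → Prop) : ℕ → V → V → Prop
  | 0 => fun u v => u = v
  | n + 1 => fun u v => u = v ∨ ∃ w, E u w ∧ distLE E n w v

/-- `H` is a `k`-transitive-closure-spanner of the digraph `E`: every edge of `H` is an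
edge of the transitive closure of `E`, and whenever `E` has a directed path from `u` to `v`,
`H` has one of length at most `k`. -/
def IsTCSpanner {V : Type*} (E H : V → V → Prop) (k : ℕ) : Prop :=
  (∀ u v, H u v → u ≠ v ∧ Relation.TransGen E u v) ∧
  (∀ u v, Relation.ReflTransGen E u v → distLE H k u v)

/-- The Boolean hypercube digraph `[2]^d`: an edge from `x` to `y` iff `y` is obtained from
`x` by flipping a single coordinate from `false` to `true`. -/
def cubeEdge (d : ℕ) (x y : Fin d → Bool) : Prop :=
  ∃ t, x t = false ∧ y = Function.update x t true

/-- The directed hypergrid `[m]^d` (vertices indexed by `Fin d → Fin m`): an edge from `x`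
to `y` iff `y - x` is a standard basis vector. -/
def hypergridEdge (m d : ℕ) (x y : Fin d → Fin m) : Prop :=
  ∃ t, (y t : ℕ) = (x t : ℕ) + 1 ∧ ∀ s, s ≠ t → x s = y s

/-- `Sk E k` : the minimum number of edges of a `k`-TC-spanner of the digraph `E`. -/
noncomputable def Sk {V : Type*} (E : V → V → Prop) (k : ℕ) : ℕ :=
  sInf {n | ∃ H : V → V → Prop, IsTCSpanner E H k ∧ ({p : V × V | H p.1 p.2}).ncard = n}

/-!
For every offset `z ∈ [m-1]^d` the subcube `z + {0,1}^d` is an order-convex copy of `[2]^d`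
inside `[m]^d`. Both digraphs are the covering relations of their coordinatewise orders, and
spanner edges only go up, so a 2-TC-spanner of `[m]^d` restricts to a 2-TC-spanner of each copy,
which therefore contains at least `L(d)` spanner edges. A spanner edge `(a, b)` lies in at most
`2^d` copies, since the copy is determined by which corner `x` of the cube `a` is. Hence
`(m-1)^d · L(d) ≤ 2^d · |H|`, which is even stronger than the claim.
-/

open Function Finset

section Spanner

variable {α β V : Type*}

lemma distLE_le [Preorder V] {H : V → V → Prop} (hH : ∀ a b, H a b → a ≤ b) :
    ∀ {k : ℕ} {u v : V}, distLE H k u v → u ≤ v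
  | 0, _, _, rfl => le_rfl
  | _ + 1, _, _, .inl rfl => le_rfl
  | _ + 1, _, _, .inr ⟨_, huw, hwv⟩ => (hH _ _ huw).trans (distLE_le hH hwv)

lemma distLE_comap [PartialOrder α] [Preorder β] {H : β → β → Prop}
    (hH : ∀ a b, H a b → a ≤ b) (f : α ↪o β) (hf : (Set.range f).OrdConnected) :
    ∀ {k : ℕ} {u v : α}, distLE H k (f u) (f v) → distLE (fun a b ↦ H (f a) (f b)) k u v
  | 0, _, _, h => f.injective h
  | _ + 1, _, _, .inl h => .inl (f.injective h)
  | _ + 1, u, v, .inr ⟨w, huw, hwv⟩ => by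
    obtain ⟨w, rfl⟩ : w ∈ Set.range f :=
      hf.out (Set.mem_range_self u) (Set.mem_range_self v) ⟨hH _ _ huw, distLE_le hH hwv⟩
    exact .inr ⟨w, huw, distLE_comap hH f hf hwv⟩

lemma isTCSpanner_covBy_iff [PartialOrder V] [LocallyFiniteOrder V] {H : V → V → Prop} {k : ℕ} :
    IsTCSpanner (· ⋖ ·) H k ↔ (∀ u v, H u v → u < v) ∧ ∀ u v, u ≤ v → distLE H k u v := by
  simp only [IsTCSpanner, ← lt_iff_transGen_covBy, ← le_iff_reflTransGen_covBy,
    and_iff_right_of_imp LT.lt.ne]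

lemma IsTCSpanner.comap [PartialOrder α] [LocallyFiniteOrder α] [PartialOrder β]
    [LocallyFiniteOrder β] {H : β → β → Prop} {k : ℕ} (hH : IsTCSpanner (· ⋖ ·) H k)
    (f : α ↪o β) (hf : (Set.range f).OrdConnected) :
    IsTCSpanner (· ⋖ ·) (fun u v ↦ H (f u) (f v)) k := by
  obtain ⟨hlt, hdist⟩ := isTCSpanner_covBy_iff.1 hH
  exact isTCSpanner_covBy_iff.2 ⟨fun u v h ↦ f.lt_iff_lt.1 (hlt _ _ h),
    fun u v huv ↦ distLE_comap (fun a b h ↦ (hlt a b h).le) f hf (hdist _ _ (f.monotone huv))⟩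

lemma Sk_le_ncard {E H : V → V → Prop} {k : ℕ} (h : IsTCSpanner E H k) :
    Sk E k ≤ {p : V × V | H p.1 p.2}.ncard :=
  Nat.sInf_le ⟨H, h, rfl⟩

end Spanner

lemma sum_ncard_comap_le {ι α β : Type*} [Fintype ι] [Fintype α] [Fintype β] (f : ι → α → β)
    (hf : ∀ i, Injective (f i)) (hf' : ∀ a, Injective (f · a)) (H : β → β → Prop) :
    ∑ i, {p : α × α | H (f i p.1) (f i p.2)}.ncard ≤
      {p : β × β | H p.1 p.2}.ncard * Fintype.card α := by
  classical
  simp only [Set.ncard_eq_toFinset_card', Set.toFinset_ofPred]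
  calc ∑ i, #{p : α × α | H (f i p.1) (f i p.2)}
      = #{q : ι × α × α | H (f q.1 q.2.1) (f q.1 q.2.2)} := by
        simp only [card_filter]; rw [Fintype.sum_prod_type]
    _ ≤ #(({p : β × β | H p.1 p.2} : Finset (β × β)) ×ˢ (univ : Finset α)) := by
        refine card_le_card_of_injOn (fun q ↦ ((f q.1 q.2.1, f q.1 q.2.2), q.2.1)) ?_ ?_
        · intro q hq
          simpa using hq
        · rintro ⟨i, a, b⟩ - ⟨j, a', b'⟩ - h
          simp only [Prod.mk.injEq] at h
          obtain ⟨⟨hia, hjb⟩, rfl⟩ := h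
          obtain rfl := hf' a hia
          obtain rfl := hf i hjb
          rfl
    _ = #{p : β × β | H p.1 p.2} * Fintype.card α := by rw [card_product, card_univ]

instance : LocallyFiniteOrder Bool := Fintype.toLocallyFiniteOrder

lemma hypergridEdge_eq_covBy (m d : ℕ) : hypergridEdge m d = (· ⋖ ·) := by
  ext x y
  simp [hypergridEdge, Pi.covBy_iff, eq_comm]

lemma cubeEdge_eq_covBy (d : ℕ) : cubeEdge d = (· ⋖ ·) := by
  ext x y
  simp [cubeEdge, Pi.covBy_iff_exists_right_eq, Bool.lt_iff]

section CubeCopies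

variable {m d : ℕ}

def cubeAt (z : Fin d → Fin (m - 1)) : (Fin d → Bool) ↪o (Fin d → Fin m) :=
  OrderEmbedding.ofMapLEIff
    (fun x i ↦ ⟨z i + (x i).toNat, by have := (z i).isLt; have := (x i).toNat_le; omega⟩)
    (fun x y ↦ forall_congr' fun i ↦ by
      simp only [Fin.mk_le_mk, Nat.add_le_add_iff_left]
      cases x i <;> cases y i <;> simp)

lemma cubeAt_val (z : Fin d → Fin (m - 1)) (x : Fin d → Bool) (i : Fin d) :
    (cubeAt z x i : ℕ) = z i + (x i).toNat := rfl

lemma ordConnected_range_cubeAt (z : Fin d → Fin (m - 1)) :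
    (Set.range (cubeAt z)).OrdConnected := by
  refine ⟨?_⟩
  rintro _ ⟨u, rfl⟩ _ ⟨v, rfl⟩ w ⟨huw, hwv⟩
  refine ⟨fun i ↦ decide ((z i : ℕ) < w i), funext fun i ↦ Fin.ext ?_⟩
  have hu := huw i
  have hv := hwv i
  simp only [Fin.le_def, cubeAt_val] at hu hv
  have := (v i).toNat_le
  by_cases h : (z i : ℕ) < w i <;> simp [cubeAt_val, h] <;> omega

lemma cubeAt_left_injective (x : Fin d → Bool) : Injective (cubeAt (m := m) · x) := by
  intro z z' h
  funext i
  have := congrArg (fun y ↦ (y i : ℕ)) h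
  simp only [cubeAt_val, Nat.add_right_cancel_iff] at this
  exact Fin.ext this

end CubeCopies

theorem stmt19_general (m d : ℕ) (hm : 2 ≤ m)
    (H : (Fin d → Fin m) → (Fin d → Fin m) → Prop)
    (hH : IsTCSpanner (hypergridEdge m d) H 2) :
    ((m : ℝ) - 1) ^ d * (Sk (cubeEdge d) 2 : ℝ) / 2 ^ (d + 1) ≤
      (({p : (Fin d → Fin m) × (Fin d → Fin m) | H p.1 p.2}).ncard : ℝ) := by
  set N := ({p : (Fin d → Fin m) × (Fin d → Fin m) | H p.1 p.2}).ncard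
  rw [hypergridEdge_eq_covBy] at hH
  have hcopy (z : Fin d → Fin (m - 1)) :
      Sk (cubeEdge d) 2 ≤ {p : _ × _ | H (cubeAt z p.1) (cubeAt z p.2)}.ncard := by
    rw [cubeEdge_eq_covBy]
    exact Sk_le_ncard (hH.comap (cubeAt z) (ordConnected_range_cubeAt z))
  have hcount : (m - 1) ^ d * Sk (cubeEdge d) 2 ≤ N * 2 ^ d :=
    calc (m - 1) ^ d * Sk (cubeEdge d) 2
        = ∑ _z : Fin d → Fin (m - 1), Sk (cubeEdge d) 2 := by simp
      _ ≤ ∑ z : Fin d → Fin (m - 1), {p : _ × _ | H (cubeAt z p.1) (cubeAt z p.2)}.ncard :=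
        Finset.sum_le_sum fun z _ ↦ hcopy z
      _ ≤ N * Fintype.card (Fin d → Bool) :=
        sum_ncard_comap_le (fun z ↦ cubeAt z) (fun z ↦ (cubeAt z).injective)
          cubeAt_left_injective H
      _ = N * 2 ^ d := by simp
  have hcount_real : ((m : ℝ) - 1) ^ d * Sk (cubeEdge d) 2 ≤ N * 2 ^ d := by
    rw [← Nat.cast_one, ← Nat.cast_sub (by omega)]
    exact_mod_cast hcount
  rw [div_le_iff₀ (by positivity), pow_succ]
  nlinarith [hcount_real, pow_pos (two_pos : (0 : ℝ) < 2) d, (N.cast_nonneg : (0 : ℝ) ≤ N)]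

/-- Every 2-TC-spanner of the directed hypergrid `[m]^d` has at least
`(m-1)^d · L(d) / 2^(d+1)` edges, where `L(d)` is the minimum size of a 2-TC-spanner of the
Boolean hypercube `[2]^d`. -/
theorem stmt19 (m d : ℕ) (hm : 2 ≤ m) (hd : 1 ≤ d)
    (H : (Fin d → Fin m) → (Fin d → Fin m) → Prop)
    (hH : IsTCSpanner (hypergridEdge m d) H 2) :
    ((m : ℝ) - 1) ^ d * (Sk (cubeEdge d) 2 : ℝ) / 2 ^ (d + 1) ≤
      (({p : (Fin d → Fin m) × (Fin d → Fin m) | H p.1 p.2}).ncard : ℝ) :=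
  stmt19_general m d hm H hH
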